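/- arXiv:2306.05655 — 3 statements merged into one kernel-verified Lean document; each statement's English description precedes it below -/
import Mathlib

section
/- Lemma 3 (smoothing approximation error): Let d ≥ 1, L ≥ 0, μ > 0, and let f : ℝ^d → ℝ be differentiable and L-smooth. Then for every x ∈ ℝ^d, |f_μ(x) − f(x)| ≤ μ² L d / 2. -/
/-!
A function whose derivative is `L`-Lipschitz stays within `L / 2 * ‖y - x‖ ^ 2` of its tangent
plane at `x`. Averaging `f (x + μ • u)` over a centred law of `u` kills the linear term, so the
smoothing error is at most `L / 2 * μ ^ 2 * E ‖u‖ ^ 2`, and `E ‖u‖ ^ 2 = d` for `N(0, I_d)`.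
-/

open MeasureTheory ProbabilityTheory

/-- The standard Gaussian measure `N(0, I_d)` on `ℝ^d`. -/
noncomputable def stdGaussian (d : ℕ) : Measure (EuclideanSpace ℝ (Fin d)) :=
  (Measure.pi fun _ : Fin d => gaussianReal 0 1).map
    (MeasurableEquiv.toLp 2 (Fin d → ℝ))

open scoped RealInnerProductSpace

section Taylor

variable {E F : Type*} [NormedAddCommGroup E] [NormedSpace ℝ E]
  [NormedAddCommGroup F] [NormedSpace ℝ F] {f : E → F} {f' : E → E →L[ℝ] F} {L : ℝ}

theorem norm_image_sub_sub_le_of_lipschitz_fderiv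
    (hf : ∀ x, HasFDerivAt f (f' x) x) (hf' : ∀ x y, ‖f' x - f' y‖ ≤ L * ‖x - y‖) (x y : E) :
    ‖f y - f x - f' x (y - x)‖ ≤ L / 2 * ‖y - x‖ ^ 2 := by
  set v := y - x
  have hderiv : ∀ t : ℝ, HasDerivAt (fun t : ℝ => f (x + t • v) - f x - t • f' x v)
      (f' (x + t • v) v - f' x v) t := by
    intro t
    have hline : HasDerivAt (fun t : ℝ => x + t • v) v t := by
      simpa using ((hasDerivAt_id t).smul_const v).const_add x
    simpa using (((hf _).comp_hasDerivAt t hline).sub_const (f x)).fun_sub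
      ((hasDerivAt_id t).smul_const (f' x v))
  have hbound : ∀ t ∈ Set.Ico (0 : ℝ) 1, ‖f' (x + t • v) v - f' x v‖ ≤ L * ‖v‖ ^ 2 * t := by
    intro t ht
    calc ‖f' (x + t • v) v - f' x v‖ = ‖(f' (x + t • v) - f' x) v‖ := rfl
      _ ≤ ‖f' (x + t • v) - f' x‖ * ‖v‖ := ContinuousLinearMap.le_opNorm _ _
      _ ≤ L * ‖t • v‖ * ‖v‖ := by
        gcongr
        simpa using hf' (x + t • v) x
      _ = L * ‖v‖ ^ 2 * t := by
        rw [norm_smul, Real.norm_of_nonneg ht.1]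
        ring
  have hB : ∀ t : ℝ, HasDerivAt (fun t => L / 2 * ‖v‖ ^ 2 * t ^ 2) (L * ‖v‖ ^ 2 * t) t :=
    fun t => ((hasDerivAt_pow 2 t).const_mul (L / 2 * ‖v‖ ^ 2)).congr_deriv (by push_cast; ring)
  simpa [v] using image_norm_le_of_norm_deriv_right_le_deriv_boundary
    (fun t _ => (hderiv t).continuousAt.continuousWithinAt)
    (fun t _ => (hderiv t).hasDerivWithinAt) (by simp) hB hbound (Set.right_mem_Icc.2 zero_le_one)

end Taylor

section Smoothing

variable {E F : Type*} [NormedAddCommGroup E] [NormedSpace ℝ E] [CompleteSpace E]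
  [MeasurableSpace E] [NormedAddCommGroup F] [NormedSpace ℝ F] [CompleteSpace F]
  {f : E → F} {f' : E → E →L[ℝ] F} {L : ℝ}

theorem norm_integral_comp_add_smul_sub_le {ν : Measure E} [IsProbabilityMeasure ν]
    (hν : MemLp id 2 ν) (hmean : ∫ u, u ∂ν = 0)
    (hf : ∀ x, HasFDerivAt f (f' x) x) (hf' : ∀ x y, ‖f' x - f' y‖ ≤ L * ‖x - y‖)
    (x : E) (μ : ℝ) :
    ‖∫ u, f (x + μ • u) ∂ν - f x‖ ≤ L / 2 * μ ^ 2 * ∫ u, ‖u‖ ^ 2 ∂ν := by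
  set r : E → F := fun u => f (x + μ • u) - f x - f' x (μ • u)
  have hr_le : ∀ u, ‖r u‖ ≤ L / 2 * μ ^ 2 * ‖u‖ ^ 2 := fun u => by
    have := norm_image_sub_sub_le_of_lipschitz_fderiv hf hf' x (x + μ • u)
    rwa [add_sub_cancel_left, norm_smul, mul_pow, Real.norm_eq_abs, sq_abs, ← mul_assoc] at this
  have hsq : Integrable (fun u => ‖u‖ ^ 2) ν := hν.integrable_norm_pow two_ne_zero
  have hr : Integrable r ν := by
    refine (hsq.const_mul (L / 2 * μ ^ 2)).mono' ?_ (.of_forall hr_le)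
    have hfc : Continuous f := continuous_iff_continuousAt.2 fun x => (hf x).continuousAt
    have hrc : Continuous r := by fun_prop
    exact hrc.comp_aestronglyMeasurable hν.aestronglyMeasurable
  have hsmul : Integrable (fun u => μ • u) ν := (hν.integrable one_le_two).smul μ
  have hlin : Integrable (fun u => f x + f' x (μ • u)) ν :=
    (integrable_const _).add ((f' x).integrable_comp hsmul)
  have hlin_zero : ∫ u, f' x (μ • u) ∂ν = 0 := by
    rw [(f' x).integral_comp_comm hsmul, integral_smul, hmean, smul_zero, map_zero]
  have hsplit : ∫ u, f (x + μ • u) ∂ν - f x = ∫ u, r u ∂ν := by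
    have hdecomp : (fun u => f (x + μ • u)) = fun u => r u + (f x + f' x (μ • u)) := by
      funext u; simp [r]
    rw [hdecomp, integral_add hr hlin,
      integral_add (integrable_const _) ((f' x).integrable_comp hsmul), hlin_zero, integral_const]
    simp
  rw [hsplit, ← integral_const_mul]
  exact norm_integral_le_of_norm_le (hsq.const_mul _) (.of_forall hr_le)

end Smoothing

theorem integral_norm_sq_stdGaussian {E : Type*} [NormedAddCommGroup E] [InnerProductSpace ℝ E]
    [FiniteDimensional ℝ E] [MeasurableSpace E] [BorelSpace E] :
    ∫ x, ‖x‖ ^ 2 ∂ProbabilityTheory.stdGaussian E = Module.finrank ℝ E := by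
  set b := stdOrthonormalBasis ℝ E
  have hmemLp : MemLp (fun x : E => x) 2 (ProbabilityTheory.stdGaussian E) :=
    IsGaussian.memLp_two_id
  have hcoord : ∀ i, ∫ x, ⟪b i, x⟫ ^ 2 ∂ProbabilityTheory.stdGaussian E = 1 := fun i => by
    have := covarianceBilin_apply hmemLp (b i) (b i)
    rw [covarianceBilin_stdGaussian] at this
    change ⟪b i, b i⟫ = _ at this
    simpa [sq, real_inner_self_eq_norm_sq, b.orthonormal.1 i] using this.symm
  simp_rw [← b.sum_sq_inner_right]
  rw [integral_finsetSum _ fun i _ => (hmemLp.const_inner (b i)).integrable_sq]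
  simp [hcoord]

theorem stdGaussian_eq_stdGaussian_euclideanSpace (d : ℕ) :
    _root_.stdGaussian d = ProbabilityTheory.stdGaussian (EuclideanSpace ℝ (Fin d)) :=
  map_pi_eq_stdGaussian

theorem smoothing_approximation_error_general
    (d : ℕ) (L μ : ℝ)
    (f : EuclideanSpace ℝ (Fin d) → ℝ)
    (hf : Differentiable ℝ f)
    (hsmooth : ∀ x y, ‖gradient f x - gradient f y‖ ≤ L * ‖x - y‖)
    (x : EuclideanSpace ℝ (Fin d)) :
    |(∫ u, f (x + μ • u) ∂stdGaussian d) - f x| ≤ μ ^ 2 * L * (d : ℝ) / 2 := by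
  have hfderiv : ∀ y z, ‖fderiv ℝ f y - fderiv ℝ f z‖ ≤ L * ‖y - z‖ := fun y z => by
    rw [← toDual_gradient, ← toDual_gradient, ← map_sub, LinearIsometryEquiv.norm_map]
    exact hsmooth y z
  have hbound := norm_integral_comp_add_smul_sub_le IsGaussian.memLp_two_id
    integral_id_stdGaussian (fun y => (hf y).hasFDerivAt) hfderiv x μ
  rw [integral_norm_sq_stdGaussian, finrank_euclideanSpace_fin,
    ← stdGaussian_eq_stdGaussian_euclideanSpace, Real.norm_eq_abs] at hbound
  exact hbound.trans_eq (by ring)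

/-- Lemma 3: the Gaussian smoothing `f_μ` satisfies `|f_μ(x) - f(x)| ≤ μ² L d / 2`. -/
theorem smoothing_approximation_error
    (d : ℕ) (hd : 1 ≤ d) (L μ : ℝ) (hL : 0 ≤ L) (hμ : 0 < μ)
    (f : EuclideanSpace ℝ (Fin d) → ℝ)
    (hf : Differentiable ℝ f)
    (hsmooth : ∀ x y, ‖gradient f x - gradient f y‖ ≤ L * ‖x - y‖)
    (x : EuclideanSpace ℝ (Fin d)) :
    |(∫ u, f (x + μ • u) ∂stdGaussian d) - f x| ≤ μ ^ 2 * L * (d : ℝ) / 2 :=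
  smoothing_approximation_error_general d L μ f hf hsmooth x
end

section
/- Descent inequality at a perturbed point: Let d ≥ 1, L ≥ 0, η > 0, and let f : ℝ^d → ℝ be differentiable and L-smooth. Then for all x, x̃ ∈ ℝ^d, f(x̃ − η ∇f(x)) ≤ f(x̃) − (η/2)‖∇f(x)‖² − (η/2)‖∇f(x̃)‖² + (η L²/2)‖x − x̃‖² + (L η²/2)‖∇f(x)‖². -/
/-!
Along the segment from `x` to `y = x + v`, the function
`t ↦ t ⟪∇f x, v⟫ + (L t² / 2) ‖v‖² - f (x + t v)` has derivative
`L t ‖v‖² - ⟪∇f (x + t v) - ∇f x, v⟫ ≥ 0` for `t ≥ 0`, so it is monotone; comparing `t = 0`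
and `t = 1` gives the descent lemma `f y ≤ f x + ⟪∇f x, y - x⟫ + (L/2) ‖y - x‖²`.
Applied at `x̃` with the step `-η ∇f(x)`, the cross term `-η ⟪∇f x̃, ∇f x⟫` is rewritten by
polarization as `-(η/2)(‖∇f x̃‖² + ‖∇f x‖² - ‖∇f x̃ - ∇f x‖²)`, and the last norm is at most
`L ‖x - x̃‖` by smoothness.
-/

open scoped RealInnerProductSpace

section DescentLemma

variable {E : Type*} [NormedAddCommGroup E] [InnerProductSpace ℝ E] [CompleteSpace E]
  {f : E → ℝ}

theorem hasDerivAt_comp_add_smul (hf : Differentiable ℝ f) (x v : E) (t : ℝ) :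
    HasDerivAt (fun s : ℝ => f (x + s • v)) ⟪gradient f (x + t • v), v⟫ t := by
  have hline : HasDerivAt (fun s : ℝ => x + s • v) v t := by
    simpa using ((hasDerivAt_id t).smul_const v).const_add x
  have h : HasDerivAt (fun s : ℝ => f (x + s • v)) _ t :=
    (hf (x + t • v)).hasGradientAt.hasFDerivAt.comp_hasDerivAt t hline
  simpa only [InnerProductSpace.toDual_apply_apply] using h

theorem le_add_inner_gradient_add_half_mul_sq {L : ℝ} (hf : Differentiable ℝ f)
    (hsmooth : ∀ x y, ‖gradient f x - gradient f y‖ ≤ L * ‖x - y‖) (x y : E) :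
    f y ≤ f x + ⟪gradient f x, y - x⟫ + L / 2 * ‖y - x‖ ^ 2 := by
  set v := y - x
  let φ : ℝ → ℝ := fun t => t * ⟪gradient f x, v⟫ + L / 2 * t ^ 2 * ‖v‖ ^ 2 - f (x + t • v)
  have hφ : ∀ t, HasDerivAt φ
      (⟪gradient f x, v⟫ + L * t * ‖v‖ ^ 2 - ⟪gradient f (x + t • v), v⟫) t := by
    intro t
    have hquad := ((hasDerivAt_id t).mul_const ⟪gradient f x, v⟫).add
      (((hasDerivAt_pow 2 t).const_mul (L / 2)).mul_const (‖v‖ ^ 2))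
    exact (hquad.sub (hasDerivAt_comp_add_smul hf x v t)).congr_deriv
      (by simp only [Nat.cast_ofNat, Nat.add_one_sub_one, pow_one]; ring)
  have hφ_nonneg : ∀ t ∈ interior (Set.Ici (0 : ℝ)),
      0 ≤ ⟪gradient f x, v⟫ + L * t * ‖v‖ ^ 2 - ⟪gradient f (x + t • v), v⟫ := by
    intro t ht
    rw [interior_Ici, Set.mem_Ioi] at ht
    have hgrad : ‖gradient f (x + t • v) - gradient f x‖ ≤ L * t * ‖v‖ := by
      simpa [norm_smul, abs_of_pos ht, mul_assoc] using hsmooth (x + t • v) x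
    suffices ⟪gradient f (x + t • v), v⟫ - ⟪gradient f x, v⟫ ≤ L * t * ‖v‖ ^ 2 by linarith
    calc ⟪gradient f (x + t • v), v⟫ - ⟪gradient f x, v⟫
        = ⟪gradient f (x + t • v) - gradient f x, v⟫ := (inner_sub_left _ _ _).symm
      _ ≤ ‖gradient f (x + t • v) - gradient f x‖ * ‖v‖ := real_inner_le_norm _ _
      _ ≤ L * t * ‖v‖ * ‖v‖ := by gcongr
      _ = L * t * ‖v‖ ^ 2 := by ring
  have hmono : MonotoneOn φ (Set.Ici 0) :=
    monotoneOn_of_hasDerivWithinAt_nonneg (convex_Ici 0)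
      (fun t _ => (hφ t).continuousAt.continuousWithinAt)
      (fun t _ => (hφ t).hasDerivWithinAt) hφ_nonneg
  have h01 : φ 0 ≤ φ 1 := hmono Set.self_mem_Ici (Set.mem_Ici.2 zero_le_one) zero_le_one
  simp only [φ, v, zero_smul, one_smul, add_zero, add_sub_cancel] at h01
  linarith

end DescentLemma

theorem descent_inequality_perturbed_point_general
    (d : ℕ) (L η : ℝ) (hη : 0 < η)
    (f : EuclideanSpace ℝ (Fin d) → ℝ)
    (hf : Differentiable ℝ f)
    (hsmooth : ∀ x y, ‖gradient f x - gradient f y‖ ≤ L * ‖x - y‖) :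
    ∀ x xt : EuclideanSpace ℝ (Fin d),
      f (xt - η • gradient f x)
        ≤ f xt - (η / 2) * ‖gradient f x‖ ^ 2 - (η / 2) * ‖gradient f xt‖ ^ 2
          + (η * L ^ 2 / 2) * ‖x - xt‖ ^ 2 + (L * η ^ 2 / 2) * ‖gradient f x‖ ^ 2 := by
  intro x xt
  have hdescent := le_add_inner_gradient_add_half_mul_sq hf hsmooth xt (xt - η • gradient f x)
  rw [sub_sub_cancel_left, inner_neg_right, real_inner_smul_right, norm_neg, norm_smul,
    Real.norm_of_nonneg hη.le] at hdescent
  have hpolar := norm_sub_sq_real (gradient f xt) (gradient f x)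
  have hgrad : ‖gradient f xt - gradient f x‖ ^ 2 ≤ L ^ 2 * ‖x - xt‖ ^ 2 := by
    rw [← mul_pow, norm_sub_rev x]
    exact pow_le_pow_left₀ (norm_nonneg _) (hsmooth xt x) 2
  linarith [mul_le_mul_of_nonneg_left hgrad hη.le, congrArg (η * ·) hpolar]

/-- Descent inequality at a perturbed point for a differentiable `L`-smooth function:
`f(x̃ - η ∇f(x)) ≤ f(x̃) - (η/2)‖∇f(x)‖² - (η/2)‖∇f(x̃)‖² + (η L²/2)‖x - x̃‖²
  + (L η²/2)‖∇f(x)‖²`. -/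
theorem descent_inequality_perturbed_point
    (d : ℕ) (hd : 1 ≤ d) (L η : ℝ) (hL : 0 ≤ L) (hη : 0 < η)
    (f : EuclideanSpace ℝ (Fin d) → ℝ)
    (hf : Differentiable ℝ f)
    (hsmooth : ∀ x y, ‖gradient f x - gradient f y‖ ≤ L * ‖x - y‖) :
    ∀ x xt : EuclideanSpace ℝ (Fin d),
      f (xt - η • gradient f x)
        ≤ f xt - (η / 2) * ‖gradient f x‖ ^ 2 - (η / 2) * ‖gradient f xt‖ ^ 2
          + (η * L ^ 2 / 2) * ‖x - xt‖ ^ 2 + (L * η ^ 2 / 2) * ‖gradient f x‖ ^ 2 :=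
  descent_inequality_perturbed_point_general d L η hη f hf hsmooth
end

section
/- One-step error-feedback contraction bound: Let d ≥ 1 and δ ∈ (0, 1]. Let e, g, c ∈ ℝ^d and suppose ‖(e + g) − c‖² ≤ (1 − δ)‖e + g‖² (c is the compression of p = e + g by a δ-contractive compressor). Then ‖(e + g) − c‖² ≤ (1 − δ/2)‖e‖² + (2(1 − δ)/δ)‖g‖². -/
/-! Write `p = e + g`. By the triangle inequality it suffices to bound `(1 - δ)(a + b)²` for
`a = ‖e‖`, `b = ‖g‖`, and the cross term `2(1 - δ)ab` is absorbed by the AM–GM (Young) inequality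
`2(1 - δ)ab ≤ (δ/2)a² + (2(1 - δ)²/δ)b²`. -/

theorem one_sub_mul_add_sq_le {δ : ℝ} (hδ0 : 0 < δ) (hδ1 : δ ≤ 1) (a b : ℝ) :
    (1 - δ) * (a + b) ^ 2 ≤ (1 - δ / 2) * a ^ 2 + 2 * (1 - δ) / δ * b ^ 2 := by
  -- `δ · (rhs - lhs) = (δa - 2(1 - δ)b)² / 2 + δ(1 - δ)b²`
  have key : δ * ((1 - δ / 2) * a ^ 2 + 2 * (1 - δ) / δ * b ^ 2 - (1 - δ) * (a + b) ^ 2) =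
      (δ * a - 2 * (1 - δ) * b) ^ 2 / 2 + δ * (1 - δ) * b ^ 2 := by
    field_simp
    ring
  have hnonneg : 0 ≤ (δ * a - 2 * (1 - δ) * b) ^ 2 / 2 + δ * (1 - δ) * b ^ 2 := by
    have : 0 ≤ 1 - δ := sub_nonneg.2 hδ1
    positivity
  rw [← key] at hnonneg
  linarith [nonneg_of_mul_nonneg_right hnonneg hδ0]

theorem one_sub_mul_norm_add_sq_le {E : Type*} [SeminormedAddGroup E] {δ : ℝ} (hδ0 : 0 < δ)
    (hδ1 : δ ≤ 1) (x y : E) :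
    (1 - δ) * ‖x + y‖ ^ 2 ≤ (1 - δ / 2) * ‖x‖ ^ 2 + 2 * (1 - δ) / δ * ‖y‖ ^ 2 :=
  calc (1 - δ) * ‖x + y‖ ^ 2 ≤ (1 - δ) * (‖x‖ + ‖y‖) ^ 2 := by
        have : 0 ≤ 1 - δ := sub_nonneg.2 hδ1
        gcongr
        exact norm_add_le x y
    _ ≤ _ := one_sub_mul_add_sq_le hδ0 hδ1 _ _

theorem one_step_error_feedback_bound_general
    (d : ℕ) (δ : ℝ) (hδ0 : 0 < δ) (hδ1 : δ ≤ 1)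
    (e g c : EuclideanSpace ℝ (Fin d))
    (h : ‖(e + g) - c‖ ^ 2 ≤ (1 - δ) * ‖e + g‖ ^ 2) :
    ‖(e + g) - c‖ ^ 2 ≤ (1 - δ / 2) * ‖e‖ ^ 2 + (2 * (1 - δ) / δ) * ‖g‖ ^ 2 :=
  h.trans (one_sub_mul_norm_add_sq_le hδ0 hδ1 e g)

/-- One-step error-feedback contraction bound: if `‖(e + g) - c‖² ≤ (1 - δ)‖e + g‖²`
(i.e. `c` is a `δ`-contractive compression of `p = e + g`), then
`‖(e + g) - c‖² ≤ (1 - δ/2)‖e‖² + (2(1 - δ)/δ)‖g‖²`. -/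
theorem one_step_error_feedback_bound
    (d : ℕ) (hd : 1 ≤ d) (δ : ℝ) (hδ0 : 0 < δ) (hδ1 : δ ≤ 1)
    (e g c : EuclideanSpace ℝ (Fin d))
    (h : ‖(e + g) - c‖ ^ 2 ≤ (1 - δ) * ‖e + g‖ ^ 2) :
    ‖(e + g) - c‖ ^ 2 ≤ (1 - δ / 2) * ‖e‖ ^ 2 + (2 * (1 - δ) / δ) * ‖g‖ ^ 2 :=
  one_step_error_feedback_bound_general d δ hδ0 hδ1 e g c h
end
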